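/- arXiv:2110.08734 — 7 statements merged into one kernel-verified Lean document; each statement's English description precedes it below -/
import Mathlib

section
/- Let B be a C*-algebra, let (Λ, ≤) be a nonempty directed preordered set, and for each F ∈ Λ let C_F be a C*-algebra and t_F : B → C_F a *-homomorphism such that ‖t_{F'}(b)‖ ≤ ‖t_F(b)‖ for all b ∈ B whenever F ≤ F'. Define J := { b ∈ B : for every ε > 0 there exists F ∈ Λ with ‖t_F(b)‖ < ε }. Then J is equal to the closure in B of the union ⋃_{F ∈ Λ} ker(t_F). -/
open scoped NNReal

/-- For a selfadjoint-free bound: every real quasispectral value of an element of a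
non-unital C*-algebra is bounded in absolute value by the norm. -/
lemma aux_quasispectrum_nonneg {A : Type*} [NonUnitalCStarAlgebra A] (b : A) :
    ∀ x ∈ quasispectrum ℝ (star b * b), 0 ≤ x := by
  intro x hx
  rw [Unitization.quasispectrum_eq_spectrum_inr' ℝ ℂ] at hx
  have hrw : ((star b * b : A) : Unitization ℂ A)
      = star (b : Unitization ℂ A) * (b : Unitization ℂ A) := by simp
  rw [hrw] at hx
  exact spectrum_star_mul_self_nonneg x hx

lemma aux_quasispectrum_abs_le {A : Type*} [NonUnitalCStarAlgebra A] {c : A} {x : ℝ}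
    (hx : x ∈ quasispectrum ℝ c) : |x| ≤ ‖c‖ := by
  rw [Unitization.quasispectrum_eq_spectrum_inr' ℝ ℂ] at hx
  have h := spectrum.norm_le_norm_of_mem hx
  rwa [Unitization.norm_inr, Real.norm_eq_abs] at h

/-- Key approximation lemma: if `‖φ b‖² < ε²/4` then there is `k ∈ ker φ` with `‖b - k‖ < ε`. -/
lemma aux_approx {A B' : Type*} [NonUnitalCStarAlgebra A] [NonUnitalCStarAlgebra B']
    (φ : A →⋆ₙₐ[ℂ] B') (b : A) {ε : ℝ} (hε : 0 < ε)
    (hb : ‖φ b‖ * ‖φ b‖ < ε ^ 2 / 4) :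
    ∃ k : A, φ k = 0 ∧ ‖b - k‖ < ε := by
  set δ : ℝ := ε ^ 2 / 4 with hδdef
  have hδ : 0 < δ := by positivity
  set a : A := star b * b with ha_def
  have ha : IsSelfAdjoint a := IsSelfAdjoint.star_mul_self b
  have ha0 : ∀ x ∈ quasispectrum ℝ a, 0 ≤ x := aux_quasispectrum_nonneg b
  set h : ℝ → ℝ := fun x => min 1 (max ((x - δ) / δ) 0) with hh_def
  have hh_cont : Continuous h := by
    apply Continuous.min continuous_const
    exact Continuous.max (by fun_prop) continuous_const
  have hh0 : h 0 = 0 := by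
    show min 1 (max ((0 - δ) / δ) 0) = 0
    have h1 : (0 - δ) / δ = -1 := by rw [zero_sub, neg_div, div_self hδ.ne']
    rw [h1, max_eq_right (by norm_num), min_eq_right zero_le_one]
  have hh_nonneg : ∀ x, 0 ≤ h x := fun x => le_min zero_le_one (le_max_right _ _)
  have hh_le_one : ∀ x, h x ≤ 1 := fun x => min_le_left _ _
  have hφcont : Continuous φ :=
    AddMonoidHomClass.continuous_of_bound φ 1
      (fun x => by simpa using NonUnitalStarAlgHom.norm_apply_le φ x)
  set c : A := cfcₙ h a with hc_def
  have hc_sa : IsSelfAdjoint c := cfcₙ_predicate h a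
  refine ⟨b * c, ?_, ?_⟩
  · -- `φ (b * c) = 0`
    have hφa : φ a = star (φ b) * φ b := by rw [ha_def, map_mul, map_star]
    have hφa_norm : ‖φ a‖ < δ := by
      rw [hφa, CStarRing.norm_star_mul_self]
      exact hb
    have hzero : cfcₙ h (φ a) = 0 := by
      have heq : (quasispectrum ℝ (φ a)).EqOn h 0 := by
        intro x hx
        have hxb : |x| ≤ ‖φ a‖ := aux_quasispectrum_abs_le hx
        have hxδ : x < δ := lt_of_le_of_lt (le_trans (le_abs_self x) hxb) hφa_norm
        have : (x - δ) / δ ≤ 0 := div_nonpos_of_nonpos_of_nonneg (by linarith) hδ.le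
        simp only [hh_def, Pi.zero_apply]
        rw [max_eq_right this, min_eq_right zero_le_one]
      calc cfcₙ h (φ a) = cfcₙ (0 : ℝ → ℝ) (φ a) := cfcₙ_congr heq
        _ = 0 := cfcₙ_zero ℝ _
    have : φ c = 0 := by
      rw [hc_def, NonUnitalStarAlgHom.map_cfcₙ φ h a hh_cont.continuousOn hh0 hφcont ha
        (ha.map φ), hzero]
    rw [map_mul, this, mul_zero]
  · -- norm estimate
    have hcomm : star (b - b * c) * (b - b * c) = a - a * c - c * a + c * a * c := by
      have hsc : star c = c := hc_sa
      rw [star_sub, star_mul, hsc]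
      rw [ha_def]
      noncomm_ring
    have e_id : cfcₙ (fun x : ℝ => x) a = a := cfcₙ_id' ℝ a ha
    have e1 : cfcₙ (fun x => x * h x) a = a * c := by
      rw [cfcₙ_mul _ _ a (by fun_prop) (by simp) hh_cont.continuousOn hh0, e_id]
    have e2 : cfcₙ (fun x => h x * x) a = c * a := by
      rw [cfcₙ_mul _ _ a hh_cont.continuousOn hh0 (by fun_prop) (by simp), e_id]
    have e3 : cfcₙ (fun x => h x * x * h x) a = c * a * c := by
      rw [cfcₙ_mul _ _ a (by fun_prop) (by simp [hh0]) hh_cont.continuousOn hh0, e2]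
    have key : a - a * c - c * a + c * a * c
        = cfcₙ (fun x => x - x * h x - h x * x + h x * x * h x) a := by
      rw [cfcₙ_add _ _ a (by fun_prop) (by simp [hh0]) (by fun_prop) (by simp [hh0]),
        cfcₙ_sub _ _ a (by fun_prop) (by simp [hh0]) (by fun_prop) (by simp [hh0]),
        cfcₙ_sub _ _ a (by fun_prop) (by simp) (by fun_prop) (by simp [hh0]),
        e_id, e1, e2, e3]
    have hbound : ‖cfcₙ (fun x => x - x * h x - h x * x + h x * x * h x) a‖ ≤ 2 * δ := by
      apply norm_cfcₙ_le
      intro x hx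
      have hx0 : 0 ≤ x := ha0 x hx
      have hfx : x - x * h x - h x * x + h x * x * h x = x * (1 - h x) ^ 2 := by ring
      rw [hfx, Real.norm_eq_abs, abs_of_nonneg (by positivity)]
      rcases le_or_gt x (2 * δ) with hle | hgt
      · have h1 : (1 - h x) ^ 2 ≤ 1 := by nlinarith [hh_nonneg x, hh_le_one x]
        nlinarith
      · have : h x = 1 := by
          have h1 : (1 : ℝ) ≤ (x - δ) / δ := by
            rw [le_div_iff₀ hδ]; linarith
          simp only [hh_def]
          rw [max_eq_left (le_trans zero_le_one h1), min_eq_left h1]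
        rw [this]
        simp [hδ.le]
    have hsq : ‖b - b * c‖ * ‖b - b * c‖ ≤ 2 * δ := by
      rw [← CStarRing.norm_star_mul_self, hcomm, key]
      exact hbound
    nlinarith [norm_nonneg (b - b * c), hε]

/-- Let `B` be a C*-algebra, `(Λ, ≤)` a nonempty directed preordered set, and
for each `F ∈ Λ` let `C F` be a C*-algebra and `t F : B → C F` a `*`-homomorphism such that
`‖t F' b‖ ≤ ‖t F b‖` whenever `F ≤ F'`.  Then
`J := {b ∈ B | ∀ ε > 0, ∃ F, ‖t F b‖ < ε}` equals the closure of `⋃ F, ker (t F)`. -/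
theorem stmt_0 {B : Type*} [NonUnitalNormedRing B] [StarRing B] [CStarRing B]
    [NormedSpace ℂ B] [IsScalarTower ℂ B B] [SMulCommClass ℂ B B] [StarModule ℂ B]
    [CompleteSpace B]
    {Λ : Type*} [Preorder Λ] [Nonempty Λ] [IsDirected Λ (· ≤ ·)]
    {C : Λ → Type*} [∀ F, NonUnitalNormedRing (C F)] [∀ F, StarRing (C F)]
    [∀ F, CStarRing (C F)] [∀ F, NormedSpace ℂ (C F)] [∀ F, IsScalarTower ℂ (C F) (C F)]
    [∀ F, SMulCommClass ℂ (C F) (C F)] [∀ F, StarModule ℂ (C F)] [∀ F, CompleteSpace (C F)]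
    (t : ∀ F, B →⋆ₙₐ[ℂ] C F)
    (hmono : ∀ ⦃F F' : Λ⦄, F ≤ F' → ∀ b : B, ‖t F' b‖ ≤ ‖t F b‖) :
    {b : B | ∀ ε : ℝ, 0 < ε → ∃ F, ‖t F b‖ < ε} =
      closure (⋃ F, {b : B | t F b = 0}) := by
  letI : NonUnitalCStarAlgebra B := { }
  ext b
  simp only [Set.mem_setOf_eq]
  constructor
  · intro hb
    rw [Metric.mem_closure_iff]
    intro ε hε
    obtain ⟨F, hF⟩ := hb (ε / 2) (by linarith)
    letI : NonUnitalCStarAlgebra (C F) := { }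
    have hsq : ‖t F b‖ * ‖t F b‖ < ε ^ 2 / 4 := by
      have := mul_self_lt_mul_self (norm_nonneg _) hF
      nlinarith
    obtain ⟨k, hk0, hk⟩ := aux_approx (t F) b hε hsq
    exact ⟨k, Set.mem_iUnion.2 ⟨F, hk0⟩, by rwa [dist_eq_norm]⟩
  · intro hb ε hε
    rw [Metric.mem_closure_iff] at hb
    obtain ⟨k, hk, hdist⟩ := hb ε hε
    obtain ⟨F, hkF⟩ := Set.mem_iUnion.1 hk
    letI : NonUnitalCStarAlgebra (C F) := { }
    refine ⟨F, ?_⟩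
    have hle := NonUnitalStarAlgHom.norm_apply_le (t F) (b - k)
    rw [map_sub, hkF, sub_zero] at hle
    calc ‖t F b‖ = ‖t F b - 0‖ := by rw [sub_zero]
      _ ≤ ‖b - k‖ := by simpa using hle
      _ < ε := by rwa [dist_eq_norm] at hdist
end

section
/- Let B be a C*-algebra, let (Λ, ≤) be a nonempty directed preordered set, and for each F ∈ Λ let C_F be a C*-algebra and t_F : B → C_F a *-homomorphism such that ‖t_{F'}(b)‖ ≤ ‖t_F(b)‖ for all b ∈ B whenever F ≤ F'. Let J be the closure in B of ⋃_{F ∈ Λ} ker(t_F). Then for every b ∈ B the distance from b to J equals the infimum ⨅_{F ∈ Λ} ‖t_F(b)‖ (which, by antitonicity, is the limit of the net F ↦ ‖t_F(b)‖). -/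
/-! A *-homomorphism `φ` of C*-algebras is contractive, so `‖φ b‖ ≤ dist b y` for `y ∈ ker φ`.
Conversely, for `c > ‖φ b‖²` functional calculus on `star b * b` gives `e = g (star b * b)` with
`g = cutoff c` vanishing on `(-∞, c]`, hence on the spectrum of `φ (star b * b)`, so that
`b * e ∈ ker φ`, while `‖b - b * e‖² = ‖((1 - g)² · id) (star b * b)‖ ≤ c`. Thus
`‖φ b‖ = dist (b, ker φ)`, and the distance to the closure of a union of nonempty sets is the
infimum of the distances to them. -/

theorem Metric.infDist_iUnion {α ι : Type*} [PseudoMetricSpace α] {s : ι → Set α}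
    (hs : ∀ i, (s i).Nonempty) (x : α) :
    infDist x (⋃ i, s i) = ⨅ i, infDist x (s i) := by
  simp only [infDist, infEDist_iUnion]
  exact ENNReal.toReal_iInf fun i => infEDist_ne_top (hs i)

noncomputable def cutoff (c s : ℝ) : ℝ := 1 - c / max s c

lemma continuous_cutoff {c : ℝ} (hc : 0 < c) : Continuous (cutoff c) :=
  continuous_const.sub <| continuous_const.div (by fun_prop) fun _ => (lt_max_of_lt_right hc).ne'

lemma cutoff_of_le {c s : ℝ} (hc : c ≠ 0) (hs : s ≤ c) : cutoff c s = 0 := by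
  rw [cutoff, max_eq_right hs, div_self hc, sub_self]

lemma one_sub_cutoff_sq_mul_le {c s : ℝ} (hc : 0 < c) (hs : 0 ≤ s) :
    (1 - cutoff c s) ^ 2 * s ≤ c := by
  rcases le_total s c with hsc | hcs
  · simpa [cutoff_of_le hc.ne' hsc] using hsc
  · have hs' : 0 < s := hc.trans_le hcs
    rw [cutoff, max_eq_left hcs, sub_sub_cancel, div_pow, div_mul_eq_mul_div,
      div_le_iff₀ (by positivity)]
    nlinarith [mul_le_mul_of_nonneg_left hcs (mul_nonneg hc.le hs)]

section CStarAlgebra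

open scoped CStarAlgebra

variable {A D : Type*} [NonUnitalCStarAlgebra A] [NonUnitalCStarAlgebra D]

lemma star_mul_self_sub_mul_cfcₙ (b : A) {f : ℝ → ℝ} (hf : Continuous f) (hf0 : f 0 = 0) :
    star (b - b * cfcₙ f (star b * b)) * (b - b * cfcₙ f (star b * b)) =
      cfcₙ (fun s => (1 - f s) ^ 2 * s) (star b * b) := by
  set a := star b * b with ha
  set G := cfcₙ f a
  have hG : star G = G := (cfcₙ_predicate f a).star_eq
  have haG : a * G = cfcₙ (fun s => s * f s) a := by
    rw [cfcₙ_mul (fun s => s) f a, cfcₙ_id' ℝ a]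
  have hGa : G * a = cfcₙ (fun s => f s * s) a := by
    rw [cfcₙ_mul f (fun s => s) a, cfcₙ_id' ℝ a]
  have hGaG : G * (a * G) = cfcₙ (fun s => f s * (s * f s)) a := by
    rw [haG, cfcₙ_mul f (fun s => s * f s) a]
  calc star (b - b * G) * (b - b * G) = a - a * G - (G * a - G * (a * G)) := by
        rw [star_sub, star_mul, hG, ha]; noncomm_ring
    _ = cfcₙ (fun s => s - s * f s - (f s * s - f s * (s * f s))) a := by
        rw [cfcₙ_sub _ _ a, cfcₙ_sub (fun s => s) _ a, cfcₙ_sub _ _ a, cfcₙ_id' ℝ a, hGaG, haG, hGa]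
    _ = cfcₙ (fun s => (1 - f s) ^ 2 * s) a := cfcₙ_congr fun s _ => by ring

lemma norm_sub_mul_cfcₙ_cutoff_sq_le (b : A) {c : ℝ} (hc : 0 < c) :
    ‖b - b * cfcₙ (cutoff c) (star b * b)‖ ^ 2 ≤ c := by
  rw [sq, ← CStarRing.norm_star_mul_self,
    star_mul_self_sub_mul_cfcₙ b (continuous_cutoff hc) (cutoff_of_le hc.ne' hc.le)]
  refine norm_cfcₙ_le fun s hs => ?_
  let _ := CStarAlgebra.spectralOrder A
  have := CStarAlgebra.spectralOrderedRing A
  have hs0 : 0 ≤ s := quasispectrum_nonneg_of_nonneg _ (star_mul_self_nonneg b) s hs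
  rw [Real.norm_of_nonneg (by positivity)]
  exact one_sub_cutoff_sq_mul_le hc hs0

lemma map_cfcₙ_cutoff_eq_zero (φ : A →⋆ₙₐ[ℂ] D) (b : A) {c : ℝ} (hc : 0 < c)
    (hφb : ‖φ b‖ ^ 2 ≤ c) : φ (cfcₙ (cutoff c) (star b * b)) = 0 := by
  have ha : IsSelfAdjoint (star b * b) := .star_mul_self b
  rw [φ.map_cfcₙ (cutoff c) _ (continuous_cutoff hc).continuousOn (cutoff_of_le hc.ne' hc.le)
    (ha := ha) (hφa := ha.map φ), ← cfcₙ_zero ℝ (φ (star b * b))]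
  refine cfcₙ_congr fun s hs => cutoff_of_le hc.ne' ?_
  calc s ≤ ‖s‖ := Real.le_norm_self s
    _ ≤ ‖φ (star b * b)‖ :=
        NonUnitalIsometricContinuousFunctionalCalculus.norm_quasispectrum_le _ hs (ha.map φ)
    _ = ‖φ b‖ ^ 2 := by rw [map_mul, map_star, CStarRing.norm_star_mul_self, sq]
    _ ≤ c := hφb

lemma NonUnitalStarAlgHom.infDist_ker_le_norm_apply (φ : A →⋆ₙₐ[ℂ] D) (b : A) :
    Metric.infDist b {x | φ x = 0} ≤ ‖φ b‖ := by
  refine le_of_forall_gt_imp_ge_of_dense fun r hr => ?_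
  have hr0 : 0 < r := (norm_nonneg _).trans_lt hr
  have hc : 0 < r ^ 2 := by positivity
  calc Metric.infDist b {x | φ x = 0} ≤ dist b (b * cfcₙ (cutoff (r ^ 2)) (star b * b)) := by
        refine Metric.infDist_le_dist_of_mem ?_
        simp [map_cfcₙ_cutoff_eq_zero φ b hc (pow_le_pow_left₀ (norm_nonneg _) hr.le 2)]
    _ ≤ r := by
        rw [dist_eq_norm]
        exact le_of_pow_le_pow_left₀ two_ne_zero hr0.le (norm_sub_mul_cfcₙ_cutoff_sq_le b hc)

lemma NonUnitalStarAlgHom.norm_apply_eq_infDist_ker (φ : A →⋆ₙₐ[ℂ] D) (b : A) :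
    ‖φ b‖ = Metric.infDist b {x | φ x = 0} := by
  refine le_antisymm ((Metric.le_infDist (s := {x | φ x = 0}) ⟨0, map_zero φ⟩).2 fun y hy => ?_)
    (φ.infDist_ker_le_norm_apply b)
  calc ‖φ b‖ = ‖φ (b - y)‖ := by rw [map_sub, hy, sub_zero]
    _ ≤ ‖b - y‖ := NonUnitalStarAlgHom.norm_apply_le φ _
    _ = dist b y := (dist_eq_norm b y).symm

end CStarAlgebra

theorem stmt_1_general {B : Type*} [NonUnitalNormedRing B] [StarRing B] [CStarRing B]
    [NormedSpace ℂ B] [IsScalarTower ℂ B B] [SMulCommClass ℂ B B] [StarModule ℂ B]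
    [CompleteSpace B]
    {Λ : Type*}
    {C : Λ → Type*} [∀ F, NonUnitalNormedRing (C F)] [∀ F, StarRing (C F)]
    [∀ F, CStarRing (C F)] [∀ F, NormedSpace ℂ (C F)] [∀ F, IsScalarTower ℂ (C F) (C F)]
    [∀ F, SMulCommClass ℂ (C F) (C F)] [∀ F, StarModule ℂ (C F)] [∀ F, CompleteSpace (C F)]
    (t : ∀ F, B →⋆ₙₐ[ℂ] C F) :
    ∀ b : B, Metric.infDist b (closure (⋃ F, {x : B | t F x = 0})) = ⨅ F, ‖t F b‖ := by
  let : NonUnitalCStarAlgebra B := {}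
  let (F : Λ) : NonUnitalCStarAlgebra (C F) := {}
  intro b
  rw [Metric.infDist_closure, Metric.infDist_iUnion fun F => ⟨0, map_zero (t F)⟩]
  exact iInf_congr fun F => ((t F).norm_apply_eq_infDist_ker b).symm

/-- With `B`, `Λ`, `C F`, `t F` as in Statement 0 (monotone norms along the
directed set), and `J` the closure of `⋃ F, ker (t F)`, the distance from any `b ∈ B` to `J`
equals `⨅ F, ‖t F b‖`. -/
theorem stmt_1 {B : Type*} [NonUnitalNormedRing B] [StarRing B] [CStarRing B]
    [NormedSpace ℂ B] [IsScalarTower ℂ B B] [SMulCommClass ℂ B B] [StarModule ℂ B]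
    [CompleteSpace B]
    {Λ : Type*} [Preorder Λ] [Nonempty Λ] [IsDirected Λ (· ≤ ·)]
    {C : Λ → Type*} [∀ F, NonUnitalNormedRing (C F)] [∀ F, StarRing (C F)]
    [∀ F, CStarRing (C F)] [∀ F, NormedSpace ℂ (C F)] [∀ F, IsScalarTower ℂ (C F) (C F)]
    [∀ F, SMulCommClass ℂ (C F) (C F)] [∀ F, StarModule ℂ (C F)] [∀ F, CompleteSpace (C F)]
    (t : ∀ F, B →⋆ₙₐ[ℂ] C F)
    (hmono : ∀ ⦃F F' : Λ⦄, F ≤ F' → ∀ b : B, ‖t F' b‖ ≤ ‖t F b‖) :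
    ∀ b : B, Metric.infDist b (closure (⋃ F, {x : B | t F x = 0})) = ⨅ F, ‖t F b‖ :=
  stmt_1_general t
end

section
/- Let G be a group and P a submonoid of G. Let α = (p₁, p₂, …, p_{2k}) be an even-length word of elements of P (k ≥ 1), and let K(α) ⊆ P be its constructible right ideal. If r ∈ K(α), then \mathring{α}·r ∈ p₁P; in particular \mathring{α}·r ∈ P. -/
/-- The iterated right quotient `\mathring{α} = p₁p₂⁻¹p₃p₄⁻¹⋯p_{2k-1}p_{2k}⁻¹` of the
even-length word `α = (p 1, p 2, …, p (2k))` (indices are `1`-based). -/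
def wordQuotient {G : Type*} [Group G] (p : ℕ → G) (k : ℕ) : G :=
  ((List.range k).map fun i => p (2 * i + 1) * (p (2 * i + 2))⁻¹).prod

/-- The element `g_j = p_{2k}p_{2k-1}⁻¹p_{2k-2}p_{2k-3}⁻¹⋯p_{2j+2}p_{2j+1}⁻¹p_{2j}`
(for `1 ≤ j ≤ k`), so that `g_k = p_{2k}`. -/
def wordG {G : Type*} [Group G] (p : ℕ → G) (k j : ℕ) : G :=
  ((List.range (k - j)).map fun i => p (2 * k - 2 * i) * (p (2 * k - 2 * i - 1))⁻¹).prod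
    * p (2 * j)

/-- The constructible right ideal `K(α) = ⋂_{j=1}^{k} g_j P` of the word
`α = (p 1, …, p (2k))`. -/
def wordK {G : Type*} [Group G] (P : Submonoid G) (p : ℕ → G) (k : ℕ) : Set G :=
  {x : G | ∀ j : ℕ, 1 ≤ j → j ≤ k → ∃ q ∈ P, x = wordG p k j * q}

lemma key {G : Type*} [Group G] (p : ℕ → G) : ∀ k, 1 ≤ k →
    wordQuotient p k * wordG p k 1 = p 1 := by
  intro k hk
  induction k, hk using Nat.le_induction with
  | base => simp [wordQuotient, wordG, List.range_succ]
  | succ n hn ih =>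
    have hq : wordQuotient p (n + 1)
        = wordQuotient p n * (p (2 * n + 1) * (p (2 * n + 2))⁻¹) := by
      simp [wordQuotient, List.range_succ]
    have hg : wordG p (n + 1) 1
        = (p (2 * n + 2) * (p (2 * n + 1))⁻¹) * wordG p n 1 := by
      have h1 : n + 1 - 1 = (n - 1) + 1 := by omega
      rw [wordG, wordG, h1, List.range_succ_eq_map]
      simp only [List.map_cons, List.prod_cons, List.map_map]
      have h2 : ∀ i, i ∈ List.range (n - 1) →
          ((fun i => p (2 * (n+1) - 2 * i) * (p (2 * (n+1) - 2 * i - 1))⁻¹) ∘ Nat.succ) i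
          = (fun i => p (2 * n - 2 * i) * (p (2 * n - 2 * i - 1))⁻¹) i := by
        intro i hi
        rw [List.mem_range] at hi
        have a1 : 2 * (n + 1) - 2 * Nat.succ i = 2 * n - 2 * i := by omega
        simp only [Function.comp, a1]
      rw [List.map_congr_left h2]
      have e1 : 2 * (n + 1) - 2 * 0 - 1 = 2 * n + 1 := by omega
      have e2 : 2 * (n + 1) - 2 * 0 = 2 * n + 2 := by omega
      rw [e1, e2, mul_assoc]
    rw [hq, hg, ← ih]
    group

/-- Let `G` be a group and `P` a submonoid of `G`.  Let
`α = (p 1, …, p (2k))` be an even-length word of elements of `P` (`k ≥ 1`) and `K(α)` its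
constructible right ideal.  If `r ∈ K(α)` then `\mathring{α}·r ∈ p₁P`; in particular
`\mathring{α}·r ∈ P`. -/
theorem stmt_2 {G : Type*} [Group G] (P : Submonoid G) (k : ℕ) (hk : 1 ≤ k)
    (p : ℕ → G) (hp : ∀ i, p i ∈ P) (r : G) (hr : r ∈ wordK P p k) :
    (∃ q ∈ P, wordQuotient p k * r = p 1 * q) ∧ wordQuotient p k * r ∈ P := by
  obtain ⟨q, hq, hrq⟩ := hr 1 le_rfl hk
  have h : wordQuotient p k * r = p 1 * q := by
    rw [hrq, ← mul_assoc, key p k hk]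
  exact ⟨⟨q, hq, h⟩, h ▸ P.mul_mem (hp 1) hq⟩
end

section
/- Let G be a group and P a submonoid of G. Let α = (p₁, p₂, …, p_{2k}) be an even-length word of elements of P (k ≥ 1) and let r ∈ P. Let β := (p₁, …, p_{2k}, r, e) be the word of length 2(k+1) obtained by appending the pair (r, e). Then K(β) = { x ∈ P : r·x ∈ K(α) }. In particular, if K(α) ∩ rP = ∅ then K(β) = ∅. -/
/-- The word `β = (p 1, …, p (2k), r, e)` of length `2(k+1)` obtained from
`α = (p 1, …, p (2k))` by appending the pair `(r, e)`. -/
def appendPair {G : Type*} [Group G] (p : ℕ → G) (k : ℕ) (r : G) : ℕ → G :=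
  fun i => if i = 2 * k + 1 then r else if i = 2 * k + 2 then 1 else p i

lemma wordG_append_top {G : Type*} [Group G] (p : ℕ → G) (k : ℕ) (r : G) :
    wordG (appendPair p k r) (k + 1) (k + 1) = 1 := by
  unfold wordG
  rw [Nat.sub_self]
  simp only [List.range_zero, List.map_nil, List.prod_nil, one_mul]
  unfold appendPair
  rw [if_neg (by omega), if_pos (by omega)]

lemma wordG_append {G : Type*} [Group G] (p : ℕ → G) (k j : ℕ) (hj1 : 1 ≤ j)
    (hjk : j ≤ k) (r : G) :
    wordG (appendPair p k r) (k + 1) j = r⁻¹ * wordG p k j := by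
  unfold wordG
  have h1 : k + 1 - j = (k - j) + 1 := by omega
  rw [h1, List.range_succ_eq_map, List.map_cons, List.map_map, List.prod_cons]
  have h0 : appendPair p k r (2 * (k + 1) - 2 * 0) *
      (appendPair p k r (2 * (k + 1) - 2 * 0 - 1))⁻¹ = r⁻¹ := by
    unfold appendPair
    have e : 2 * (k + 1) - 2 * 0 = 2 * k + 2 := by omega
    have e' : 2 * k + 2 - 1 = 2 * k + 1 := by omega
    rw [e, e', if_neg (by omega), if_pos rfl, if_pos rfl, one_mul]
  rw [h0]
  have h2 : appendPair p k r (2 * j) = p (2 * j) := by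
    simp only [appendPair]
    rw [if_neg (by omega), if_neg (by omega)]
  rw [h2, mul_assoc]
  congr 2
  apply congrArg List.prod
  apply List.map_congr_left
  intro i hi
  simp only [List.mem_range] at hi
  simp only [Function.comp_apply, Nat.succ_eq_add_one]
  have e1 : 2 * (k + 1) - 2 * (i + 1) = 2 * k - 2 * i := by omega
  rw [e1]
  have e2 : appendPair p k r (2 * k - 2 * i) = p (2 * k - 2 * i) := by
    simp only [appendPair]; rw [if_neg (by omega), if_neg (by omega)]
  have e3 : appendPair p k r (2 * k - 2 * i - 1) = p (2 * k - 2 * i - 1) := by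
    simp only [appendPair]; rw [if_neg (by omega), if_neg (by omega)]
  rw [e2, e3]

theorem stmt_3 {G : Type*} [Group G] (P : Submonoid G) (k : ℕ) (hk : 1 ≤ k)
    (p : ℕ → G) (hp : ∀ i, p i ∈ P) (r : G) (hr : r ∈ P) :
    wordK P (appendPair p k r) (k + 1) = {x : G | x ∈ P ∧ r * x ∈ wordK P p k} ∧
      (wordK P p k ∩ {x : G | ∃ q ∈ P, x = r * q} = ∅ →
        wordK P (appendPair p k r) (k + 1) = ∅) := by
  have main : wordK P (appendPair p k r) (k + 1) = {x : G | x ∈ P ∧ r * x ∈ wordK P p k} := by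
    ext x
    constructor
    · intro hx
      obtain ⟨q, hq, hxq⟩ := hx (k + 1) (by omega) le_rfl
      rw [wordG_append_top, one_mul] at hxq
      refine ⟨hxq ▸ hq, ?_⟩
      intro j hj1 hjk
      obtain ⟨q', hq', hxq'⟩ := hx j hj1 (by omega)
      rw [wordG_append p k j hj1 hjk r] at hxq'
      exact ⟨q', hq', by rw [hxq']; group⟩
    · rintro ⟨hxP, hrx⟩
      intro j hj1 hjk
      rcases eq_or_lt_of_le hjk with hEq | hlt
      · exact ⟨x, hxP, by rw [hEq, wordG_append_top, one_mul]⟩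
      · have hjk' : j ≤ k := by omega
        obtain ⟨q, hq, hrxq⟩ := hrx j hj1 hjk'
        refine ⟨q, hq, ?_⟩
        rw [wordG_append p k j hj1 hjk' r, mul_assoc, ← hrxq]
        group
  refine ⟨main, fun h => ?_⟩
  rw [main, Set.eq_empty_iff_forall_notMem]
  rintro x ⟨hxP, hrx⟩
  have : r * x ∈ wordK P p k ∩ {x : G | ∃ q ∈ P, x = r * q} := ⟨hrx, x, hxP, rfl⟩
  rw [h] at this
  exact this
end

section
/- Let G be a group, P a submonoid of G, and for p ∈ P let L_p be the isometry of ℓ²(P) determined by L_p δ_q = δ_{pq}. Let α = (p₁, p₂, …, p_{2k}) be an even-length word of elements of P (k ≥ 1) and set L_α := L_{p₁}(L_{p₂})† L_{p₃}(L_{p₄})† ⋯ L_{p_{2k-1}}(L_{p_{2k}})†. Then for every s ∈ P: if s ∈ K(α), then \mathring{α}·s (computed in G) lies in P and L_α δ_s = δ_{\mathring{α}s}; and if s ∉ K(α), then L_α δ_s = 0. -/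
/-- The operator `L_α = L_{p₁}(L_{p₂})† L_{p₃}(L_{p₄})† ⋯ L_{p_{2k-1}}(L_{p_{2k}})†` on
`ℓ²(P)` associated to the even-length word `α = (w 1, …, w (2k))` of elements of `P`. -/
noncomputable def wordOp {G : Type*} [Group G] (P : Submonoid G)
    (L : P → (lp (fun _ : P => ℂ) 2 →L[ℂ] lp (fun _ : P => ℂ) 2)) (w : ℕ → P) (k : ℕ) :
    lp (fun _ : P => ℂ) 2 →L[ℂ] lp (fun _ : P => ℂ) 2 :=
  ((List.range k).map fun i =>
    L (w (2 * i + 1)) * ContinuousLinearMap.adjoint (L (w (2 * i + 2)))).prod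

section Aux

variable {G : Type*} [Group G] [DecidableEq G] (P : Submonoid G)

private lemma eq_of_coords {f g : lp (fun _ : P => ℂ) 2} (h : ∀ r : P, f r = g r) : f = g :=
  lp.ext (funext h)

private lemma coord_eq_inner (f : lp (fun _ : P => ℂ) 2) (r : P) :
    f r = inner (𝕜 := ℂ) (lp.single 2 r (1 : ℂ)) f := by
  rw [lp.inner_single_left]
  simp [RCLike.inner_apply]

variable (L : P → (lp (fun _ : P => ℂ) 2 →L[ℂ] lp (fun _ : P => ℂ) 2))

private lemma adj_single_mem
    (hL : ∀ p q : P, L p (lp.single 2 q 1) = lp.single 2 (p * q) 1) (p t : P) :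
    ContinuousLinearMap.adjoint (L p) (lp.single 2 (p * t) (1 : ℂ)) = lp.single 2 t 1 := by
  apply eq_of_coords
  intro r
  rw [coord_eq_inner, ContinuousLinearMap.adjoint_inner_right, hL, lp.inner_single_left]
  by_cases h : r = t
  · subst h
    simp [lp.single_apply_self, RCLike.inner_apply]
  · have hne : p * r ≠ p * t := by
      intro hc
      have hcG : (p : G) * r = (p : G) * t := by exact_mod_cast congrArg Subtype.val hc
      exact h (Subtype.ext (mul_left_cancel hcG))
    rw [lp.single_apply_ne _ _ _ hne, lp.single_apply_ne _ _ _ h]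
    simp [RCLike.inner_apply]

private lemma adj_single_zero
    (hL : ∀ p q : P, L p (lp.single 2 q 1) = lp.single 2 (p * q) 1) (p s : P) (h : ∀ t : P, (s : G) ≠ (p : G) * t) :
    ContinuousLinearMap.adjoint (L p) (lp.single 2 s (1 : ℂ)) = 0 := by
  apply eq_of_coords
  intro r
  rw [coord_eq_inner, ContinuousLinearMap.adjoint_inner_right, hL, lp.inner_single_left]
  have hne : p * r ≠ s := by
    intro hc
    exact h r (by rw [← hc]; push_cast; ring)
  rw [lp.single_apply_ne _ _ _ hne]
  simp [RCLike.inner_apply]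

private lemma wordQuotient_succ (p : ℕ → G) (k : ℕ) :
    wordQuotient p (k + 1) = wordQuotient p k * (p (2 * k + 1) * (p (2 * k + 2))⁻¹) := by
  unfold wordQuotient
  rw [List.range_succ, List.map_append, List.prod_append]
  simp

private lemma wordG_top (p : ℕ → G) (k : ℕ) :
    wordG p (k + 1) (k + 1) = p (2 * k + 2) := by
  unfold wordG
  rw [Nat.sub_self]
  have : 2 * (k + 1) = 2 * k + 2 := by ring
  simp [this]

private lemma wordG_succ (p : ℕ → G) (k j : ℕ) (hj : j ≤ k) :
    wordG p (k + 1) j = p (2 * k + 2) * (p (2 * k + 1))⁻¹ * wordG p k j := by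
  unfold wordG
  have h1 : k + 1 - j = (k - j) + 1 := by omega
  rw [h1, List.range_succ_eq_map, List.map_cons, List.prod_cons, List.map_map]
  have h2 : (2 * (k + 1) - 2 * 0) = 2 * k + 2 := by omega
  have h3 : (2 * k + 2 - 1) = 2 * k + 1 := by omega
  have h4 : ((fun i => p (2 * (k + 1) - 2 * i) * (p (2 * (k + 1) - 2 * i - 1))⁻¹) ∘ Nat.succ)
      = fun i => p (2 * k - 2 * i) * (p (2 * k - 2 * i - 1))⁻¹ := by
    funext i
    have h5 : 2 * (k + 1) - 2 * Nat.succ i = 2 * k - 2 * i := by omega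
    simp only [Function.comp_apply, h5]
  rw [h2, h3, h4]
  group

private lemma mem_wordK_succ (p : ℕ → G) (k : ℕ) (x : G) :
    x ∈ wordK P p (k + 1) ↔
      (∃ q ∈ P, x = p (2 * k + 2) * q) ∧
        p (2 * k + 1) * (p (2 * k + 2))⁻¹ * x ∈ wordK P p k := by
  constructor
  · intro h
    refine ⟨?_, ?_⟩
    · obtain ⟨q, hq, hx⟩ := h (k + 1) (by omega) le_rfl
      exact ⟨q, hq, by rw [hx, wordG_top]⟩
    · intro j hj1 hjk
      obtain ⟨q, hq, hx⟩ := h j hj1 (by omega)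
      refine ⟨q, hq, ?_⟩
      rw [hx, wordG_succ _ _ _ hjk]
      group
  · rintro ⟨⟨q, hq, hx⟩, h2⟩ j hj1 hjk
    rcases Nat.eq_or_lt_of_le hjk with hEq | hlt
    · subst hEq
      exact ⟨q, hq, by rw [hx, wordG_top]⟩
    · obtain ⟨r, hr, hx'⟩ := h2 j hj1 (by omega)
      refine ⟨r, hr, ?_⟩
      rw [wordG_succ _ _ _ (by omega)]
      calc x = p (2 * k + 2) * (p (2 * k + 1))⁻¹ * (p (2 * k + 1) * (p (2 * k + 2))⁻¹ * x) := by
              group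
        _ = p (2 * k + 2) * (p (2 * k + 1))⁻¹ * (wordG p k j * r) := by rw [hx']
        _ = p (2 * k + 2) * (p (2 * k + 1))⁻¹ * wordG p k j * r := by group

private lemma key_s5
    (hL : ∀ p q : P, L p (lp.single 2 q 1) = lp.single 2 (p * q) 1) (k : ℕ) (w : ℕ → P) : ∀ s : P,
    (((s : G) ∈ wordK P (fun i => (w i : G)) k →
      ∃ t : P, (t : G) = wordQuotient (fun i => (w i : G)) k * (s : G) ∧
        wordOp P L w k (lp.single 2 s 1) = lp.single 2 t 1)) ∧
    (((s : G) ∉ wordK P (fun i => (w i : G)) k →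
      wordOp P L w k (lp.single 2 s 1) = 0)) := by
  induction k with
  | zero =>
    intro s
    constructor
    · intro _
      refine ⟨s, by simp [wordQuotient], by simp [wordOp]⟩
    · intro hs
      exact absurd (fun j hj1 hj0 => absurd (hj1.trans hj0) (by omega)) hs
  | succ k ih =>
    intro s
    have hop : ∀ f, wordOp P L w (k + 1) f
        = wordOp P L w k
            ((L (w (2 * k + 1))) ((ContinuousLinearMap.adjoint (L (w (2 * k + 2)))) f)) := by
      intro f
      unfold wordOp
      rw [List.range_succ, List.map_append, List.prod_append]
      simp [ContinuousLinearMap.mul_apply]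
    by_cases hc : ∃ t : P, (s : G) = (w (2 * k + 2) : G) * t
    · obtain ⟨t, ht⟩ := hc
      have hst : s = w (2 * k + 2) * t := Subtype.ext (by push_cast; exact ht)
      have hadj : (ContinuousLinearMap.adjoint (L (w (2 * k + 2)))) (lp.single 2 s 1)
          = lp.single 2 t 1 := by rw [hst]; exact adj_single_mem P L hL _ _
      set s' : P := w (2 * k + 1) * t with hs'def
      have hs'G : (s' : G) = (w (2 * k + 1) : G) * (w (2 * k + 2) : G)⁻¹ * (s : G) := by
        simp only [hs'def, Submonoid.coe_mul]; rw [ht]; group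
      have hop2 : wordOp P L w (k + 1) (lp.single 2 s 1)
          = wordOp P L w k (lp.single 2 s' 1) := by
        rw [hop, hadj, hL]
      constructor
      · intro hs
        have hmem := (mem_wordK_succ P _ k (s : G)).mp hs
        have hs'mem : (s' : G) ∈ wordK P (fun i => (w i : G)) k := by
          rw [hs'G]; exact hmem.2
        obtain ⟨t', ht', hopt'⟩ := (ih s').1 hs'mem
        refine ⟨t', ?_, by rw [hop2, hopt']⟩
        rw [ht', hs'G, wordQuotient_succ]
        group
      · intro hs
        have hs'nmem : (s' : G) ∉ wordK P (fun i => (w i : G)) k := by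
          intro hmem
          exact hs ((mem_wordK_succ P _ k (s : G)).mpr
            ⟨⟨(t : G), t.2, ht⟩, by rw [← hs'G]; exact hmem⟩)
        rw [hop2]
        exact (ih s').2 hs'nmem
    · push_neg at hc
      have hadj : (ContinuousLinearMap.adjoint (L (w (2 * k + 2)))) (lp.single 2 s 1) = 0 :=
        adj_single_zero P L hL _ _ hc
      constructor
      · intro hs
        obtain ⟨q, hq, hx⟩ := hs (k + 1) (by omega) le_rfl
        rw [wordG_top] at hx
        exact absurd hx (hc ⟨q, hq⟩)
      · intro _
        rw [hop, hadj, map_zero, map_zero]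

end Aux

/-- Let `G` be a group, `P` a submonoid of `G`, and `L_p` the isometry of
`ℓ²(P)` determined by `L_p δ_q = δ_{pq}`.  Let `α = (w 1, …, w (2k))` be an even-length word
of elements of `P` (`k ≥ 1`) and `L_α = L_{w 1}(L_{w 2})† ⋯ L_{w (2k-1)}(L_{w (2k)})†`.
Then for every `s ∈ P`: if `s ∈ K(α)` then `\mathring{α}·s` lies in `P` and
`L_α δ_s = δ_{\mathring{α} s}`; and if `s ∉ K(α)` then `L_α δ_s = 0`. -/
theorem stmt_5 {G : Type*} [Group G] [DecidableEq G] (P : Submonoid G)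
    (L : P → (lp (fun _ : P => ℂ) 2 →L[ℂ] lp (fun _ : P => ℂ) 2))
    (hL : ∀ p q : P, L p (lp.single 2 q 1) = lp.single 2 (p * q) 1)
    (k : ℕ) (hk : 1 ≤ k) (w : ℕ → P) (s : P) :
    (((s : G) ∈ wordK P (fun i => (w i : G)) k →
      ∃ t : P, (t : G) = wordQuotient (fun i => (w i : G)) k * (s : G) ∧
        wordOp P L w k (lp.single 2 s 1) = lp.single 2 t 1)) ∧
    (((s : G) ∉ wordK P (fun i => (w i : G)) k →
      wordOp P L w k (lp.single 2 s 1) = 0)) :=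
  key_s5 P L hL k w s
end

section
/- Let G be a group and P a submonoid of G with identity e. Let B be a unital C*-algebra with 1 ≠ 0, and let w : P → B satisfy w_e = 1, (w_p)* w_p = 1 and w_p w_q = w_{pq} for all p, q ∈ P. Suppose there exists a positive, norm-contractive linear map E : B → B such that for every k ≥ 1 and all p₁, …, p_{2k} ∈ P: E(w_{p₁}(w_{p₂})* w_{p₃}(w_{p₄})* ⋯ w_{p_{2k-1}}(w_{p_{2k}})*) equals w_{p₁}(w_{p₂})* ⋯ w_{p_{2k-1}}(w_{p_{2k}})* if p₁p₂⁻¹p₃p₄⁻¹⋯p_{2k-1}p_{2k}⁻¹ = e in G, and equals 0 otherwise. Then for every finitely supported function c : P → ℂ one has ‖Σ_{p} c_p L_p‖_{B(ℓ²(P))} ≤ ‖Σ_{p} c_p w_p‖_B, where L_p is the isometry of ℓ²(P) determined by L_p δ_q = δ_{pq}. -/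
/-!
Applied to the alternating word `w_e w_x* w_y w_e*`, the hypothesis on `E` says that
`E(w_x* w_y) = δ_{x,y}`, so `E(m* m) = ‖ξ‖²` for `m = Σ f_q w_q` and `ξ = Σ f_q δ_q`.
With `a = Σ c_p w_p` and `T = Σ c_p L_p`, the element `a m` is built from `T ξ` in the same
way, hence `E((a m)*(a m)) = ‖T ξ‖²`. Since `(a m)*(a m) ≤ ‖a‖² m* m` and `E` is positive,
`‖T ξ‖ ≤ ‖a‖ ‖ξ‖` on the dense subspace of finitely supported vectors.
-/

open scoped InnerProductSpace

lemma lp.opNorm_le_of_forall_sum_single {ι 𝕜 F : Type*} [DecidableEq ι]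
    [NontriviallyNormedField 𝕜] [NormedAddCommGroup F] [NormedSpace 𝕜 F]
    {p : ENNReal} [Fact (1 ≤ p)] (hp : p ≠ ⊤)
    (T : lp (fun _ : ι => 𝕜) p →L[𝕜] F) {C : ℝ} (hC : 0 ≤ C)
    (h : ∀ (s : Finset ι) (f : ι → 𝕜),
      ‖T (∑ q ∈ s, f q • lp.single p q 1)‖ ≤
        C * ‖∑ q ∈ s, f q • lp.single (E := fun _ => 𝕜) p q 1‖) :
    ‖T‖ ≤ C := by
  refine T.opNorm_le_bound hC fun ξ => ?_
  have hξ : HasSum (fun q => ξ q • lp.single (E := fun _ => 𝕜) p q 1) ξ := by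
    simpa [← lp.single_smul] using lp.hasSum_single hp ξ
  exact le_of_tendsto_of_tendsto' ((T.continuous.tendsto ξ).comp hξ).norm
    (hξ.norm.const_mul C) fun s => h s _

lemma lp.inner_sum_single_sum_single {ι κ 𝕜 : Type*} [RCLike 𝕜] [DecidableEq ι]
    (s : Finset κ) (u : κ → 𝕜) (v : κ → ι) :
    ⟪∑ i ∈ s, u i • lp.single 2 (v i) 1,
        ∑ j ∈ s, u j • lp.single (E := fun _ => 𝕜) 2 (v j) 1⟫_𝕜 =
      ∑ i ∈ s, ∑ j ∈ s, if v i = v j then star (u i) * u j else 0 := by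
  rw [sum_inner]
  refine Finset.sum_congr rfl fun i _ => ?_
  rw [inner_sum]
  refine Finset.sum_congr rfl fun j _ => ?_
  rw [inner_smul_left, inner_smul_right, lp.inner_single_left]
  split_ifs with h <;> simp [lp.single_apply, h]

lemma map_star_sum_mul_sum_eq_norm_sq {A ι κ : Type*} [NormedRing A] [StarRing A]
    [NormedAlgebra ℂ A] [StarModule ℂ A] [DecidableEq ι] (w : ι → A) (E : A →ₗ[ℂ] A)
    (hE : ∀ x y, E (star (w x) * w y) = if x = y then 1 else 0)
    (s : Finset κ) (u : κ → ℂ) (v : κ → ι) :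
    E (star (∑ i ∈ s, u i • w (v i)) * ∑ j ∈ s, u j • w (v j)) =
      algebraMap ℝ A (‖∑ i ∈ s, u i • lp.single (E := fun _ : ι => ℂ) 2 (v i) 1‖ ^ 2) := by
  have hgram : E (star (∑ i ∈ s, u i • w (v i)) * ∑ j ∈ s, u j • w (v j)) =
      (∑ i ∈ s, ∑ j ∈ s, if v i = v j then star (u i) * u j else 0) • 1 := by
    simp only [star_sum, Finset.sum_mul_sum, star_smul, smul_mul_smul_comm, map_sum, map_smul, hE,
      Finset.sum_smul]
    refine Finset.sum_congr rfl fun i _ => Finset.sum_congr rfl fun j _ => ?_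
    split_ifs <;> simp
  rw [hgram, ← lp.inner_sum_single_sum_single, inner_self_eq_norm_sq_to_K,
    Algebra.algebraMap_eq_smul_one]
  norm_cast

lemma map_star_mul_mul_le_norm_sq_smul {A : Type*} [CStarAlgebra A] [PartialOrder A]
    [StarOrderedRing A] (E : A →ₗ[ℂ] A) (hE_pos : ∀ a, 0 ≤ a → 0 ≤ E a) (b x : A) :
    E (star (b * x) * (b * x)) ≤ (‖b‖ ^ 2) • E (star x * x) := by
  have h : star (b * x) * (b * x) ≤ (‖b‖ ^ 2) • (star x * x) := by
    simpa [star_mul, mul_assoc, CStarRing.norm_star_mul_self, sq] using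
      CStarAlgebra.star_left_conjugate_le_norm_smul (a := x) (b := star b * b)
  simpa [LinearMap.map_smul_of_tower] using hE_pos _ (sub_nonneg.2 h)

section

variable {M : Type*} [Monoid M] [DecidableEq M]
variable {A : Type*} [CStarAlgebra A] [PartialOrder A] [StarOrderedRing A] [Nontrivial A]

local notation "ℓ²" => lp (fun _ : M => ℂ) 2

lemma norm_sum_smul_apply_le_of_expectation (w : M → A) (hw_mul : ∀ p q, w p * w q = w (p * q))
    (E : A →ₗ[ℂ] A) (hE_pos : ∀ a, 0 ≤ a → 0 ≤ E a)
    (hE : ∀ x y, E (star (w x) * w y) = if x = y then 1 else 0)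
    (L : M → (ℓ² →L[ℂ] ℓ²)) (hL : ∀ p q, L p (lp.single 2 q 1) = lp.single 2 (p * q) 1)
    (t : Finset M) (c : M → ℂ) (s : Finset M) (f : M → ℂ) :
    ‖(∑ p ∈ t, c p • L p) (∑ q ∈ s, f q • lp.single 2 q 1)‖ ≤
      ‖∑ p ∈ t, c p • w p‖ * ‖(∑ q ∈ s, f q • lp.single 2 q 1 : ℓ²)‖ := by
  have hwprod : (∑ p ∈ t, c p • w p) * ∑ q ∈ s, f q • w q =
      ∑ pq ∈ t ×ˢ s, (c pq.1 * f pq.2) • w (pq.1 * pq.2) := by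
    simp only [Finset.sum_mul_sum, Finset.sum_product, smul_mul_smul_comm, hw_mul]
  have hLprod : (∑ p ∈ t, c p • L p) (∑ q ∈ s, f q • lp.single 2 q 1) =
      ∑ pq ∈ t ×ˢ s, (c pq.1 * f pq.2) • (lp.single 2 (pq.1 * pq.2) 1 : ℓ²) := by
    simp only [FunLike.coe_sum, Finset.sum_apply, FunLike.coe_smul, Pi.smul_apply, map_sum,
      map_smul, hL, Finset.smul_sum, smul_smul, Finset.sum_product, mul_comm (f _)]
    exact Finset.sum_comm
  have h := map_star_mul_mul_le_norm_sq_smul E hE_pos (∑ p ∈ t, c p • w p) (∑ q ∈ s, f q • w q)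
  rw [hwprod, map_star_sum_mul_sum_eq_norm_sq w E hE, map_star_sum_mul_sum_eq_norm_sq w E hE,
    ← hLprod, Algebra.smul_def, ← map_mul, algebraMap_le_algebraMap, ← mul_pow] at h
  exact le_of_pow_le_pow_left₀ two_ne_zero (by positivity) h

end

theorem stmt_9_general {G : Type*} [Group G] [DecidableEq G] (P : Submonoid G)
    {B : Type*} [NormedRing B] [StarRing B] [CStarRing B] [NormedAlgebra ℂ B]
    [CompleteSpace B] [StarModule ℂ B] [PartialOrder B] [StarOrderedRing B] [Nontrivial B]
    (w : P → B) (hw_e : w 1 = 1) (hw_isom : ∀ p : P, star (w p) * w p = 1)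
    (hw_mul : ∀ p q : P, w p * w q = w (p * q))
    (E : B →ₗ[ℂ] B) (hE_pos : ∀ b : B, 0 ≤ b → 0 ≤ E b)
    (hE : ∀ k : ℕ, 1 ≤ k → ∀ p : ℕ → P,
      E (((List.range k).map fun i => w (p (2 * i + 1)) * star (w (p (2 * i + 2)))).prod) =
        if ((List.range k).map fun i =>
              (p (2 * i + 1) : G) * ((p (2 * i + 2) : G))⁻¹).prod = 1 then
          ((List.range k).map fun i => w (p (2 * i + 1)) * star (w (p (2 * i + 2)))).prod
        else 0)
    (L : P → (lp (fun _ : P => ℂ) 2 →L[ℂ] lp (fun _ : P => ℂ) 2))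
    (hL : ∀ p q : P, L p (lp.single 2 q 1) = lp.single 2 (p * q) 1)
    (c : P →₀ ℂ) :
    ‖∑ p ∈ c.support, c p • L p‖ ≤ ‖∑ p ∈ c.support, c p • w p‖ := by
  let _ : CStarAlgebra B := {}
  have horth : ∀ x y : P, E (star (w x) * w y) = if x = y then 1 else 0 := by
    intro x y
    have h := hE 2 one_le_two fun n => if n = 2 then x else if n = 3 then y else 1
    simp [List.range_succ, hw_e, inv_mul_eq_one] at h
    rw [h]
    split_ifs with hxy
    · exact hxy ▸ hw_isom x
    · rfl
  exact lp.opNorm_le_of_forall_sum_single (by norm_num) _ (norm_nonneg _)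
    (norm_sum_smul_apply_le_of_expectation w hw_mul E hE_pos horth L hL c.support c)

/-- Let `G` be a group, `P` a submonoid of `G` with identity `e`, `B` a unital
C*-algebra with `1 ≠ 0`, and `w : P → B` an isometric representation of `P` (`w_e = 1`,
`w_p* w_p = 1`, `w_p w_q = w_{pq}`).  Suppose there is a positive norm-contractive linear map
`E : B → B` fixing each alternating product `w_{p₁} w_{p₂}* ⋯ w_{p_{2k-1}} w_{p_{2k}}*`
whose iterated right quotient `p₁p₂⁻¹⋯p_{2k-1}p_{2k}⁻¹` is `e`, and annihilating it otherwise.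
Then `‖Σ_p c_p L_p‖ ≤ ‖Σ_p c_p w_p‖` for every finitely supported `c : P → ℂ`, where `L_p` is
the isometry of `ℓ²(P)` determined by `L_p δ_q = δ_{pq}`. -/
theorem stmt_9 {G : Type*} [Group G] [DecidableEq G] (P : Submonoid G)
    {B : Type*} [NormedRing B] [StarRing B] [CStarRing B] [NormedAlgebra ℂ B]
    [CompleteSpace B] [StarModule ℂ B] [PartialOrder B] [StarOrderedRing B] [Nontrivial B]
    (w : P → B) (hw_e : w 1 = 1) (hw_isom : ∀ p : P, star (w p) * w p = 1)
    (hw_mul : ∀ p q : P, w p * w q = w (p * q))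
    (E : B →ₗ[ℂ] B) (hE_pos : ∀ b : B, 0 ≤ b → 0 ≤ E b) (hE_contr : ∀ b : B, ‖E b‖ ≤ ‖b‖)
    (hE : ∀ k : ℕ, 1 ≤ k → ∀ p : ℕ → P,
      E (((List.range k).map fun i => w (p (2 * i + 1)) * star (w (p (2 * i + 2)))).prod) =
        if ((List.range k).map fun i =>
              (p (2 * i + 1) : G) * ((p (2 * i + 2) : G))⁻¹).prod = 1 then
          ((List.range k).map fun i => w (p (2 * i + 1)) * star (w (p (2 * i + 2)))).prod
        else 0)
    (L : P → (lp (fun _ : P => ℂ) 2 →L[ℂ] lp (fun _ : P => ℂ) 2))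
    (hL : ∀ p q : P, L p (lp.single 2 q 1) = lp.single 2 (p * q) 1)
    (c : P →₀ ℂ) :
    ‖∑ p ∈ c.support, c p • L p‖ ≤ ‖∑ p ∈ c.support, c p • w p‖ :=
  stmt_9_general P w hw_e hw_isom hw_mul E hE_pos hE L hL c
end

section
/- Let G be a group, P a submonoid of G, and for p ∈ P let L_p be the isometry of ℓ²(P) determined by L_p δ_q = δ_{pq}. Then for every n ≥ 1 and all finitely supported functions c⁽¹⁾, …, c⁽ⁿ⁾ : P → ℂ one has Σ_{i=1}^{n} Σ_{p} |c⁽ⁱ⁾_p|² ≤ ‖Σ_{i=1}^{n} (Σ_{p} c⁽ⁱ⁾_p L_p)† (Σ_{q} c⁽ⁱ⁾_q L_q)‖_{B(ℓ²(P))}. -/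
/-!
Test the operator `T = Σᵢ Aᵢ† Aᵢ`, with `Aᵢ = Σ_p c⁽ⁱ⁾_p L_p`, against the unit vector `δ₁`:
`⟪δ₁, T δ₁⟫ = Σᵢ ‖Aᵢ δ₁‖²` is at most `‖T‖`, and `Aᵢ δ₁ = Σ_p c⁽ⁱ⁾_p δ_p` has squared norm
`Σ_p |c⁽ⁱ⁾_p|²` because the `δ_p` are orthonormal.
-/

open scoped InnerProductSpace

namespace ContinuousLinearMap

variable {𝕜 E F ι : Type*} [RCLike 𝕜] [NormedAddCommGroup E] [InnerProductSpace 𝕜 E]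
  [CompleteSpace E] [NormedAddCommGroup F] [InnerProductSpace 𝕜 F] [CompleteSpace F]

theorem sum_norm_apply_sq_le_norm_sum_adjoint_comp_self (s : Finset ι) (A : ι → E →L[𝕜] F)
    {x : E} (hx : ‖x‖ = 1) :
    ∑ i ∈ s, ‖A i x‖ ^ 2 ≤ ‖∑ i ∈ s, adjoint (A i) ∘L A i‖ := by
  set T := ∑ i ∈ s, adjoint (A i) ∘L A i
  calc ∑ i ∈ s, ‖A i x‖ ^ 2 = RCLike.re ⟪x, T x⟫_𝕜 := by
        simp only [T, apply_norm_sq_eq_inner_adjoint_right, sum_apply, inner_sum, map_sum]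
    _ ≤ ‖x‖ * ‖T x‖ := re_inner_le_norm x (T x)
    _ ≤ ‖T‖ := by simpa [hx] using T.le_opNorm x

end ContinuousLinearMap

theorem lp.norm_sum_single_two_sq {𝕜 ι : Type*} [RCLike 𝕜] [DecidableEq ι] (s : Finset ι)
    (f : ι → 𝕜) :
    ‖∑ i ∈ s, lp.single 2 i (f i)‖ ^ 2 = ∑ i ∈ s, ‖f i‖ ^ 2 := by
  have h := lp.norm_sum_single (E := fun _ : ι => 𝕜) (p := 2) (by norm_num) f s
  simp only [ENNReal.toReal_ofNat, Real.rpow_two] at h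
  exact h

theorem stmt_11_general {G : Type*} [Group G] [DecidableEq G] (P : Submonoid G)
    (L : P → (lp (fun _ : P => ℂ) 2 →L[ℂ] lp (fun _ : P => ℂ) 2))
    (hL : ∀ p q : P, L p (lp.single 2 q 1) = lp.single 2 (p * q) 1)
    (n : ℕ) (c : Fin n → (P →₀ ℂ)) :
    ∑ i : Fin n, ∑ p ∈ (c i).support, ‖c i p‖ ^ 2 ≤
      ‖∑ i : Fin n,
        ContinuousLinearMap.adjoint (∑ p ∈ (c i).support, c i p • L p) *
          (∑ q ∈ (c i).support, c i q • L q)‖ := by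
  set A : Fin n → _ := fun i => ∑ p ∈ (c i).support, c i p • L p
  have hA : ∀ i, A i (lp.single 2 1 1) = ∑ p ∈ (c i).support, lp.single 2 p (c i p) := fun i => by
    simp [A, hL, ← lp.single_smul]
  calc ∑ i : Fin n, ∑ p ∈ (c i).support, ‖c i p‖ ^ 2 = ∑ i, ‖A i (lp.single 2 1 1)‖ ^ 2 := by
        simp only [hA, lp.norm_sum_single_two_sq]
    _ ≤ _ := ContinuousLinearMap.sum_norm_apply_sq_le_norm_sum_adjoint_comp_self _ A
          (by simp [lp.norm_single])

/-- Let `G` be a group, `P` a submonoid of `G`, and `L_p` the isometry of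
`ℓ²(P)` determined by `L_p δ_q = δ_{pq}`.  Then for every `n ≥ 1` and all finitely supported
functions `c⁽¹⁾, …, c⁽ⁿ⁾ : P → ℂ`,
`Σᵢ Σ_p |c⁽ⁱ⁾_p|² ≤ ‖Σᵢ (Σ_p c⁽ⁱ⁾_p L_p)† (Σ_q c⁽ⁱ⁾_q L_q)‖`. -/
theorem stmt_11 {G : Type*} [Group G] [DecidableEq G] (P : Submonoid G)
    (L : P → (lp (fun _ : P => ℂ) 2 →L[ℂ] lp (fun _ : P => ℂ) 2))
    (hL : ∀ p q : P, L p (lp.single 2 q 1) = lp.single 2 (p * q) 1)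
    (n : ℕ) (hn : 1 ≤ n) (c : Fin n → (P →₀ ℂ)) :
    ∑ i : Fin n, ∑ p ∈ (c i).support, ‖c i p‖ ^ 2 ≤
      ‖∑ i : Fin n,
        ContinuousLinearMap.adjoint (∑ p ∈ (c i).support, c i p • L p) *
          (∑ q ∈ (c i).support, c i q • L q)‖ :=
  stmt_11_general P L hL n c
end
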